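/- Let A = 15+4√14, B = 15-4√14. For i ≥ 0 define c_{4i+4} = ((86+23√14)A^i-(86-23√14)B^i)/(2√14) and e_{4i+4} = ((101+27√14)A^i-(101-27√14)B^i)/(2√14). Then for every n ≥ 2, Σ_{k=1}^{n-1} c_{4k} · e_{4(n-k)} = ((n-1)/56)·[(17380+4645√14)A^{n-2} + (17380-4645√14)B^{n-2}] + (√14/392)·(A^{n-1} - B^{n-1}). -/

import Mathlib

/-! Both sequences have the Binet form `(a Aⁱ - a' Bⁱ) / (2√14)`. In their convolution the
products `A^i A^(n-2-i)` and `B^i B^(n-2-i)` are constant, giving the `(n - 1)` part, while the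
mixed products form the geometric sum `∑ Aⁱ B^(n-2-i) = (A^(n-1) - B^(n-1)) / (A - B)` with
`A - B = 8√14`; the two mixed coefficients add up to `-16`. -/

open Finset

theorem sum_range_binet_mul_binet {R : Type*} [CommRing R] (A B a a' b b' : R) (m : ℕ) :
    ∑ i ∈ range m, (a * A ^ i - a' * B ^ i) * (b * A ^ (m - 1 - i) - b' * B ^ (m - 1 - i)) =
      m * (a * b * A ^ (m - 1) + a' * b' * B ^ (m - 1))
        - (a * b' + a' * b) * ∑ i ∈ range m, A ^ i * B ^ (m - 1 - i) := by
  have hexpand : ∀ i,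
      (a * A ^ i - a' * B ^ i) * (b * A ^ (m - 1 - i) - b' * B ^ (m - 1 - i)) =
        a * b * (A ^ i * A ^ (m - 1 - i)) + a' * b' * (B ^ i * B ^ (m - 1 - i))
          - a * b' * (A ^ i * B ^ (m - 1 - i)) - a' * b * (B ^ i * A ^ (m - 1 - i)) :=
    fun i => by ring
  simp only [hexpand, sum_add_distrib, sum_sub_distrib, ← mul_sum, geom_sum₂_self,
    geom_sum₂_comm B A]
  ring

theorem sum_Icc_one_eq_sum_range_antidiagonal {M : Type*} [AddCommMonoid M] (f : ℕ → ℕ → M)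
    (m : ℕ) : ∑ k ∈ Icc 1 m, f (k - 1) (m - k) = ∑ i ∈ range m, f i (m - 1 - i) := by
  rw [← Ico_add_one_right_eq_Icc, sum_Ico_eq_sum_range, Nat.add_sub_cancel]
  refine sum_congr rfl fun i _ => ?_
  congr 1 <;> omega

theorem stmt_9
    (c4 e4 : ℕ → ℝ)
    (hc4 : ∀ i : ℕ, c4 i =
      ((86 + 23 * Real.sqrt 14) * (15 + 4 * Real.sqrt 14) ^ i
        - (86 - 23 * Real.sqrt 14) * (15 - 4 * Real.sqrt 14) ^ i)
      / (2 * Real.sqrt 14))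
    (he4 : ∀ i : ℕ, e4 i =
      ((101 + 27 * Real.sqrt 14) * (15 + 4 * Real.sqrt 14) ^ i
        - (101 - 27 * Real.sqrt 14) * (15 - 4 * Real.sqrt 14) ^ i)
      / (2 * Real.sqrt 14)) :
    ∀ n : ℕ, 2 ≤ n →
      ∑ k ∈ Finset.Icc 1 (n-1), c4 (k-1) * e4 (n - k - 1) =
        ((n - 1 : ℝ) / 56) * ((17380 + 4645 * Real.sqrt 14) * (15 + 4 * Real.sqrt 14) ^ (n-2)
          + (17380 - 4645 * Real.sqrt 14) * (15 - 4 * Real.sqrt 14) ^ (n-2))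
        + (Real.sqrt 14 / 392) *
            ((15 + 4 * Real.sqrt 14) ^ (n-1) - (15 - 4 * Real.sqrt 14) ^ (n-1)) := by
  intro n hn
  obtain ⟨m, rfl⟩ : ∃ m, n = m + 1 := ⟨n - 1, by omega⟩
  rw [show m + 1 - 2 = m - 1 by omega, Nat.add_sub_cancel]
  set s := Real.sqrt 14
  have hs : s ^ 2 = 14 := Real.sq_sqrt (by norm_num)
  have hprod : (86 + 23 * s) * (101 + 27 * s) = 17380 + 4645 * s := by linear_combination 621 * hs
  have hprod' : (86 - 23 * s) * (101 - 27 * s) = 17380 - 4645 * s := by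
    linear_combination 621 * hs
  have hcross : (86 + 23 * s) * (101 - 27 * s) + (86 - 23 * s) * (101 + 27 * s) = -16 := by
    linear_combination -1242 * hs
  have hden : 2 * s * (2 * s) = 56 := by linear_combination 4 * hs
  have hgeom := geom_sum₂_mul (15 + 4 * s) (15 - 4 * s) m
  rw [show 15 + 4 * s - (15 - 4 * s) = 8 * s by ring] at hgeom
  set T := ∑ i ∈ range m, (15 + 4 * s) ^ i * (15 - 4 * s) ^ (m - 1 - i)
  have hshift : ∀ k, m + 1 - k - 1 = m - k := fun k => by omega
  simp only [hshift]
  rw [sum_Icc_one_eq_sum_range_antidiagonal (fun i j => c4 i * e4 j)]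
  simp only [hc4, he4, div_mul_div_comm, ← sum_div, sum_range_binet_mul_binet, hprod, hprod',
    hcross, hden, ← hgeom]
  push_cast
  linear_combination (-T / 49) * hs
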